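/- Let μ be a probability measure on {0,1}^ℤ such that for μ-a.e. η the path encoding S(η) lies in 𝒮_{critical}. Then T_*μ = μ if and only if ι_*μ = μ, where ι is the particle–hole involution ι(η) n = 1 − η n. Moreover, if either of these conditions holds, then for μ-a.e. η one has (T η) n = 1 − η n for every n ∈ ℤ. -/

import Mathlib

open MeasureTheory Filter

/-- The past maximum `M n = sup_{m ≤ n} S m` of a two-sided path. -/
noncomputable def ballMax (S : ℤ → ℤ) (n : ℤ) : ℤ := sSup (S '' Set.Iic n)

/-- The future minimum `I n = inf_{m ≥ n} S m` of a two-sided path. -/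
noncomputable def ballMin (S : ℤ → ℤ) (n : ℤ) : ℤ := sInf (S '' Set.Ici n)

/-- Pitman's transform `(TS) n = 2 M n - S n - 2 M 0`. -/
noncomputable def Tbb (S : ℤ → ℤ) : ℤ → ℤ := fun n => 2 * ballMax S n - S n - 2 * ballMax S 0

/-- The inverse transform `(T⁻¹S) n = 2 I n - S n - 2 I 0`. -/
noncomputable def TbbInv (S : ℤ → ℤ) : ℤ → ℤ := fun n => 2 * ballMin S n - S n - 2 * ballMin S 0

/-- The `k`-th iterate `T^k`, using `T` for `k ≥ 0` and `T⁻¹` for `k < 0`. -/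
noncomputable def Titer (k : ℤ) (S : ℤ → ℤ) : ℤ → ℤ :=
  if 0 ≤ k then Tbb^[k.toNat] S else TbbInv^[(-k).toNat] S

/-- `S ∈ 𝒮⁰`: a two-sided nearest-neighbour path started at `0`. -/
def inS0 (S : ℤ → ℤ) : Prop := S 0 = 0 ∧ ∀ n : ℤ, |S n - S (n - 1)| = 1

/-- `S ∈ 𝒮^{rev}`: the reversible set. -/
def inSrev (S : ℤ → ℤ) : Prop :=
  inS0 S ∧ BddAbove (S '' Set.Iic 0) ∧ BddBelow (S '' Set.Ici 0) ∧
    Filter.limsup (fun n : ℤ => ((S n : ℝ) : EReal)) Filter.atTop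
      = ⨆ n : ℤ, ((S n : ℝ) : EReal) ∧
    Filter.liminf (fun n : ℤ => ((S n : ℝ) : EReal)) Filter.atBot
      = ⨅ n : ℤ, ((S n : ℝ) : EReal)

/-- `S ∈ 𝒮^{inv}`: all iterates of the dynamics lie in the reversible set. -/
def inSinv (S : ℤ → ℤ) : Prop := ∀ k : ℤ, inSrev (Titer k S)

/-- The path encoding `S(η)` of a configuration `η : ℤ → Bool`: the unique `S ∈ 𝒮⁰` with
`S n - S (n-1) = -1` if there is a particle at `n` and `+1` otherwise. -/
noncomputable def pathEncode (η : ℤ → Bool) : ℤ → ℤ := fun n =>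
  if 0 ≤ n then ∑ m ∈ Finset.Ioc (0 : ℤ) n, (if η m then (-1 : ℤ) else 1)
  else -∑ m ∈ Finset.Ioc n (0 : ℤ), (if η m then (-1 : ℤ) else 1)

/-- The box-ball map on configurations, extended (measurably) to all of `{0,1}^ℤ`; it agrees
with the definition `(Tη) n = 1 ↔ (TS) n - (TS)(n-1) = -1` wherever `{S(η) n : n ≤ 0}` is
bounded above. -/
noncomputable def Tbbs (η : ℤ → Bool) : ℤ → Bool := fun n =>
  if Tbb (pathEncode η) n - Tbb (pathEncode η) (n - 1) = -1 then true else false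

/-- `S ∈ 𝒮⁺_K` for an integer `K ≥ 1` (formulated in `EReal`). -/
def inSplusK (K : ℤ) (S : ℤ → ℤ) : Prop :=
  (⨆ n : ℤ, ((⨆ m ∈ Set.Iic n, ((S m : ℝ) : EReal)) - ⨅ m ∈ Set.Ici n, ((S m : ℝ) : EReal)))
      = ((K : ℝ) : EReal) ∧
  Filter.limsup (fun n : ℤ => ((S n : ℝ) : EReal)) Filter.atTop
      - Filter.liminf (fun n : ℤ => ((S n : ℝ) : EReal)) Filter.atTop = ((K : ℝ) : EReal)

/-- `S ∈ 𝒮⁻_K` for an integer `K ≥ 1`. -/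
def inSminusK (K : ℤ) (S : ℤ → ℤ) : Prop :=
  (⨆ n : ℤ, ((⨆ m ∈ Set.Iic n, ((S m : ℝ) : EReal)) - ⨅ m ∈ Set.Ici n, ((S m : ℝ) : EReal)))
      = ((K : ℝ) : EReal) ∧
  Filter.limsup (fun n : ℤ => ((S n : ℝ) : EReal)) Filter.atBot
      - Filter.liminf (fun n : ℤ => ((S n : ℝ) : EReal)) Filter.atBot = ((K : ℝ) : EReal)

/-- `S ∈ 𝒮_{critical}`. -/
def inScrit (S : ℤ → ℤ) : Prop :=
  (∃ K : ℤ, 1 ≤ K ∧ inSminusK K S) ∧ (∃ K : ℤ, 1 ≤ K ∧ inSplusK K S)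

/-!
Write `S = S(η)` and call `q` a record of `S` if `S r < S q` for all `r < q`. Membership in `𝒮⁻_K`
forces `S` to have a global minimum `lo`, visited arbitrarily far to the left, and to oscillate
between `lo` and `lo + K` near `-∞`; in particular there are no records near `-∞`. If `S` has no
records at all, its past maximum is constant, so `TS = -S`, i.e. `Tη = ιη`. A record of `S(Tη)` at
`q` forces a record of `S(η)` before `q`. Hence if `T` preserves `μ`, the probability of a record
at or before `m` does not depend on `m` and tends to `0` as `m → -∞`: a.e. there is no record, and
`T = ι` a.e. Conversely, if `ι` preserves `μ`, then `-S` is a.e. critical as well, so `S` attains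
its global maximum arbitrarily far to the left and again has no records.
-/

section PathEncoding

variable (η : ℤ → Bool)

lemma pathEncode_of_nonpos {n : ℤ} (hn : n ≤ 0) :
    pathEncode η n = -∑ m ∈ Finset.Ioc n 0, (if η m then (-1 : ℤ) else 1) := by
  rcases hn.lt_or_eq with hn | rfl
  · exact if_neg hn.not_ge
  · simp [pathEncode]

lemma pathEncode_sub_pred (n : ℤ) :
    pathEncode η n - pathEncode η (n - 1) = if η n then -1 else 1 := by
  rcases le_or_gt 1 n with hn | hn
  · rw [pathEncode, if_pos (by omega), pathEncode, if_pos (by omega),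
      ← Finset.insert_Ioc_pred_right_eq_Ioc (by omega : (0 : ℤ) < n), Order.pred_eq_sub_one,
      Finset.sum_insert (by simp)]
    ring
  · rw [pathEncode_of_nonpos η (by omega), pathEncode_of_nonpos η (by omega : n - 1 ≤ 0),
      ← Order.pred_eq_sub_one, ← Finset.insert_Ioc_left_eq_Ioc_pred_of_not_isMin (by omega)
        (not_isMin n), Finset.sum_insert (by simp)]
    ring

lemma abs_pathEncode_sub_pred (n : ℤ) : |pathEncode η n - pathEncode η (n - 1)| = 1 := by
  rw [pathEncode_sub_pred]
  split <;> rfl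

lemma pathEncode_eq_of_sub_pred {F : ℤ → ℤ} (h0 : F 0 = 0)
    (hF : ∀ n, F n - F (n - 1) = if η n then -1 else 1) : pathEncode η = F := by
  funext n
  induction n using Int.induction_on with
  | zero => simp [pathEncode, h0]
  | succ i ih =>
    have hη := pathEncode_sub_pred η (i + 1)
    have hF := hF (i + 1)
    simp only [add_sub_cancel_right] at hη hF
    omega
  | pred i ih =>
    have hη := pathEncode_sub_pred η (-i)
    have hF := hF (-i)
    omega

lemma pathEncode_not : pathEncode (fun n => !η n) = -pathEncode η := by
  refine pathEncode_eq_of_sub_pred _ (by simp [pathEncode]) fun n => ?_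
  rw [Pi.neg_apply, Pi.neg_apply, neg_sub_neg, ← neg_sub, pathEncode_sub_pred]
  cases η n <;> rfl

lemma pathEncode_injective : Function.Injective pathEncode := by
  intro η ξ h
  funext n
  have hn := pathEncode_sub_pred ξ n
  rw [← h, pathEncode_sub_pred] at hn
  revert hn
  cases η n <;> cases ξ n <;> simp

end PathEncoding

section PitmanTransform

variable {S : ℤ → ℤ}

lemma bddAbove_image_Iic_of_eventually_le {a : ℤ} (h : ∀ᶠ m in atBot, S m ≤ a) (n : ℤ) :
    BddAbove (S '' Set.Iic n) := by
  obtain ⟨n₀, hn₀⟩ := eventually_atBot.1 h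
  have hsub : S '' Set.Iic n ⊆ S '' Set.Iic n₀ ∪ S '' Set.Icc n₀ n := by
    rintro _ ⟨m, hm, rfl⟩
    rcases le_total m n₀ with hm₀ | hm₀
    · exact Or.inl ⟨m, hm₀, rfl⟩
    · exact Or.inr ⟨m, ⟨hm₀, hm⟩, rfl⟩
  refine BddAbove.mono hsub (BddAbove.union ⟨a, ?_⟩ ((Set.finite_Icc n₀ n).image S).bddAbove)
  rintro _ ⟨m, hm, rfl⟩
  exact hn₀ m hm

lemma le_ballMax {m n : ℤ} (hb : BddAbove (S '' Set.Iic n)) (h : m ≤ n) : S m ≤ ballMax S n :=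
  le_csSup hb ⟨m, h, rfl⟩

lemma ballMax_eq_max_pred {n : ℤ} (hb : BddAbove (S '' Set.Iic (n - 1))) :
    ballMax S n = max (S n) (ballMax S (n - 1)) := by
  have hIic : Set.Iic n = insert n (Set.Iic (n - 1)) := by
    ext m
    simp only [Set.mem_Iic, Set.mem_insert_iff]
    omega
  rw [ballMax, hIic, Set.image_insert_eq,
    csSup_insert hb ⟨S (n - 1), n - 1, Set.mem_Iic.2 le_rfl, rfl⟩]
  rfl

lemma ballMax_eq_of_frequently_eq {a n : ℤ} (hle : ∀ m ≤ n, S m ≤ a)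
    (hfreq : ∃ᶠ m in atBot, S m = a) : ballMax S n = a := by
  obtain ⟨m, hm, hmn⟩ := (hfreq.and_eventually (eventually_le_atBot n)).exists
  exact IsGreatest.csSup_eq ⟨⟨m, hmn, hm⟩, by rintro _ ⟨k, hk, rfl⟩; exact hle k hk⟩

lemma abs_Tbb_sub_pred {n : ℤ} (hS : |S n - S (n - 1)| = 1)
    (hb : BddAbove (S '' Set.Iic (n - 1))) : |Tbb S n - Tbb S (n - 1)| = 1 := by
  have hmax := ballMax_eq_max_pred hb
  have hle := le_ballMax hb le_rfl
  rw [abs_eq zero_le_one] at hS ⊢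
  simp only [Tbb]
  omega

lemma pathEncode_Tbbs {η : ℤ → Bool} (hb : ∀ n, BddAbove (pathEncode η '' Set.Iic n)) :
    pathEncode (Tbbs η) = Tbb (pathEncode η) := by
  refine pathEncode_eq_of_sub_pred _ (by simp [Tbb, pathEncode]) fun n => ?_
  have hstep := abs_Tbb_sub_pred (abs_pathEncode_sub_pred η n) (hb (n - 1))
  rw [abs_eq zero_le_one] at hstep
  by_cases hc : Tbb (pathEncode η) n - Tbb (pathEncode η) (n - 1) = -1
  · simp [Tbbs, hc]
  · simp only [Tbbs, hc, if_false, Bool.false_eq_true]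
    omega

def IsRecord (S : ℤ → ℤ) (q : ℤ) : Prop := ∀ r < q, S r < S q

lemma not_isRecord_of_frequently_le {q : ℤ} (h : ∃ᶠ r in atBot, S q ≤ S r) : ¬ IsRecord S q :=
  fun hq =>
    let ⟨r, hqr, hrq⟩ := (h.and_eventually (eventually_lt_atBot q)).exists
    (hq r hrq).not_ge hqr

lemma le_of_forall_not_isRecord {a p : ℤ} (ha : ∀ᶠ m in atBot, S m ≤ a)
    (hnr : ∀ q < p, ¬ IsRecord S q) : ∀ n < p, S n ≤ a := by
  intro n hn
  by_contra! hna
  obtain ⟨n₀, hn₀⟩ := eventually_atBot.1 ha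
  -- the first time `S` exceeds `a` would be a record
  obtain ⟨q, ⟨hqn, hqa⟩, hleast⟩ := Int.exists_least_of_bdd (P := fun z => z ≤ n ∧ a < S z)
    ⟨n₀ + 1, fun z hz => by by_contra! hz'; linarith [hn₀ z (by omega), hz.2]⟩ ⟨n, le_rfl, hna⟩
  refine hnr q (by omega) fun r hr => ?_
  have hra : S r ≤ a := by
    by_contra! hra
    linarith [hleast r ⟨by omega, hra⟩]
  omega

end PitmanTransform

structure OscillatesAtBot (S : ℤ → ℤ) (lo hi : ℤ) : Prop where
  lo_lt_hi : lo < hi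
  lo_le : ∀ n, lo ≤ S n
  frequently_eq_lo : ∃ᶠ n in atBot, S n = lo
  eventually_le_hi : ∀ᶠ n in atBot, S n ≤ hi
  frequently_eq_hi : ∃ᶠ n in atBot, S n = hi

namespace OscillatesAtBot

variable {S : ℤ → ℤ} {lo hi : ℤ}

lemma bddAbove_image_Iic (h : OscillatesAtBot S lo hi) (n : ℤ) : BddAbove (S '' Set.Iic n) :=
  bddAbove_image_Iic_of_eventually_le h.eventually_le_hi n

lemma eventually_not_isRecord (h : OscillatesAtBot S lo hi) : ∀ᶠ q in atBot, ¬ IsRecord S q :=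
  h.eventually_le_hi.mono fun _ hq =>
    not_isRecord_of_frequently_le (h.frequently_eq_hi.mono fun _ hr => hr ▸ hq)

lemma Tbb_eq_neg (h : OscillatesAtBot S lo hi) (hnr : ∀ q, ¬ IsRecord S q) : Tbb S = -S := by
  have hM : ∀ n, ballMax S n = hi := fun n =>
    ballMax_eq_of_frequently_eq
      (fun m _ => le_of_forall_not_isRecord h.eventually_le_hi (fun q _ => hnr q) m (lt_add_one m))
      h.frequently_eq_hi
  funext n
  simp only [Tbb, hM, Pi.neg_apply]
  ring

lemma exists_isRecord_of_isRecord_Tbb (h : OscillatesAtBot S lo hi)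
    (hS : ∀ n, |S n - S (n - 1)| = 1) {q : ℤ} (hq : IsRecord (Tbb S) q) :
    ∃ p < q, IsRecord S p := by
  by_contra! hnr
  have hle := le_of_forall_not_isRecord h.eventually_le_hi hnr
  -- `Tbb S` at an earlier visit `m` of the minimum is at least `Tbb S q`, as `S q ≤ hi + 1`
  obtain ⟨m, hm, hmq⟩ := (h.frequently_eq_lo.and_eventually (eventually_lt_atBot q)).exists
  have hMm : ballMax S m = hi :=
    ballMax_eq_of_frequently_eq (fun k hk => hle k (by omega)) h.frequently_eq_hi
  have hMq : ballMax S (q - 1) = hi :=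
    ballMax_eq_of_frequently_eq (fun k hk => hle k (by omega)) h.frequently_eq_hi
  have hmax := ballMax_eq_max_pred (h.bddAbove_image_Iic (q - 1)) (n := q)
  have hrec := hq m hmq
  have hstep := hS q
  rw [abs_eq zero_le_one] at hstep
  have hlo_q := h.lo_le q
  have hpred_le := hle (q - 1) (by omega)
  have hlt := h.lo_lt_hi
  simp only [Tbb] at hrec
  omega

end OscillatesAtBot

lemma forall_not_isRecord_of_oscillatesAtBot_neg {S : ℤ → ℤ} {lo hi : ℤ}
    (h : OscillatesAtBot (-S) lo hi) (q : ℤ) : ¬ IsRecord S q :=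
  not_isRecord_of_frequently_le <| h.frequently_eq_lo.mono fun r hr => by
    have hq := h.lo_le q
    simp only [Pi.neg_apply] at hr hq
    omega

lemma EReal.exists_coe_of_sub_eq_coe {x y : EReal} {K : ℝ} (h : x - y = K) :
    ∃ u l : ℝ, x = u ∧ y = l ∧ u - l = K := by
  induction x using EReal.rec <;> induction y using EReal.rec <;>
    first
    | exact ⟨_, _, rfl, rfl, by exact_mod_cast h⟩
    | simp at h

lemma sub_le_of_iSup_sub_iInf_le {S : ℤ → ℤ} {K : ℤ}
    (h : (⨆ n : ℤ, ((⨆ m ∈ Set.Iic n, ((S m : ℝ) : EReal)) - ⨅ m ∈ Set.Ici n, ((S m : ℝ) : EReal)))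
      ≤ ((K : ℝ) : EReal)) {n m : ℤ} (hnm : n ≤ m) : S n - S m ≤ K := by
  have hsub : ((S n : ℝ) : EReal) - ((S m : ℝ) : EReal)
      ≤ (⨆ k ∈ Set.Iic n, ((S k : ℝ) : EReal)) - ⨅ k ∈ Set.Ici n, ((S k : ℝ) : EReal) :=
    EReal.sub_le_sub (le_iSup₂_of_le n Set.self_mem_Iic le_rfl) (iInf₂_le m hnm)
  have := h.trans' (le_iSup_of_le n hsub)
  exact_mod_cast this

lemma exists_forall_le_of_sub_le {S : ℤ → ℤ} {K c : ℤ} (hdrop : ∀ n m, n ≤ m → S n - S m ≤ K)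
    (hc : ∀ᶠ n in atBot, c ≤ S n) : ∃ m₀, ∀ n, S m₀ ≤ S n := by
  obtain ⟨n₁, hn₁⟩ := eventually_atBot.1 hc
  have hbdd : BddBelow (Set.range S) := by
    refine ⟨min c (S n₁ - K), ?_⟩
    rintro _ ⟨n, rfl⟩
    rcases le_total n n₁ with hn | hn
    · exact min_le_of_left_le (hn₁ n hn)
    · exact min_le_of_right_le (by linarith [hdrop n₁ n hn])
  obtain ⟨m₀, hm₀⟩ := Int.csInf_mem (Set.range_nonempty S) hbdd
  exact ⟨m₀, fun n => hm₀ ▸ csInf_le hbdd ⟨n, rfl⟩⟩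

lemma oscillatesAtBot_of_inSminusK {K : ℤ} {S : ℤ → ℤ} (hK : 1 ≤ K) (h : inSminusK K S) :
    ∃ lo, OscillatesAtBot S lo (lo + K) := by
  obtain ⟨hsup, hlim⟩ := h
  have hdrop : ∀ n m, n ≤ m → S n - S m ≤ K := fun _ _ => sub_le_of_iSup_sub_iInf_le hsup.le
  obtain ⟨u, l, hu, hl, hul⟩ := EReal.exists_coe_of_sub_eq_coe hlim
  obtain ⟨c, hc⟩ := exists_int_lt l
  obtain ⟨m₀, hm₀⟩ := exists_forall_le_of_sub_le hdrop <|
    (eventually_lt_of_lt_liminf (hl ▸ EReal.coe_lt_coe_iff.2 hc)).mono fun n hn =>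
      (by exact_mod_cast hn : c < S n).le
  have hhi : ∀ᶠ n in atBot, S n ≤ S m₀ + K :=
    eventually_atBot.2 ⟨m₀, fun n hn => by linarith [hdrop n m₀ hn]⟩
  -- `S m₀ ≤ liminf ≤ limsup ≤ S m₀ + K` and `limsup - liminf = K` pin down both
  have hlo_l : (S m₀ : ℝ) ≤ l := by
    have : ((S m₀ : ℝ) : EReal) ≤ l := hl ▸ le_liminf_of_le (by isBoundedDefault)
      (Eventually.of_forall fun n => by exact_mod_cast hm₀ n)
    exact_mod_cast this
  have hu_hi : u ≤ ((S m₀ + K : ℤ) : ℝ) := by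
    have : (u : EReal) ≤ ((S m₀ + K : ℤ) : ℝ) := hu ▸ limsup_le_of_le (by isBoundedDefault)
      (hhi.mono fun n hn => by exact_mod_cast hn)
    exact_mod_cast this
  push_cast at hu_hi
  refine ⟨S m₀, by omega, hm₀, ?_, hhi, ?_⟩
  · have hlt : l < ((S m₀ + 1 : ℤ) : ℝ) := by push_cast; linarith
    refine (frequently_lt_of_liminf_lt (by isBoundedDefault) (hl ▸ EReal.coe_lt_coe_iff.2 hlt)).mono
      fun n hn => le_antisymm ?_ (hm₀ n)
    have : S n < S m₀ + 1 := by exact_mod_cast hn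
    omega
  · have hlt : ((S m₀ + K - 1 : ℤ) : ℝ) < u := by push_cast; linarith
    refine ((frequently_lt_of_lt_limsup (by isBoundedDefault)
      (hu ▸ EReal.coe_lt_coe_iff.2 hlt)).and_eventually hhi).mono fun n hn => ?_
    have : S m₀ + K - 1 < S n := by exact_mod_cast hn.1
    omega

lemma exists_oscillatesAtBot_of_inScrit {S : ℤ → ℤ} (h : inScrit S) :
    ∃ lo hi, OscillatesAtBot S lo hi :=
  let ⟨⟨_, hK, hS⟩, _⟩ := h
  let ⟨lo, hlo⟩ := oscillatesAtBot_of_inSminusK hK hS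
  ⟨lo, _, hlo⟩

lemma Tbbs_eq_not_of_forall_not_isRecord {η : ℤ → Bool} {lo hi : ℤ}
    (h : OscillatesAtBot (pathEncode η) lo hi) (hnr : ∀ q, ¬ IsRecord (pathEncode η) q) :
    Tbbs η = fun n => !η n :=
  pathEncode_injective <| by
    rw [pathEncode_Tbbs h.bddAbove_image_Iic, h.Tbb_eq_neg hnr, pathEncode_not]

lemma measurable_pathEncode_apply (n : ℤ) : Measurable fun η : ℤ → Bool => pathEncode η n := by
  have hstep : ∀ m, Measurable fun η : ℤ → Bool => if η m then (-1 : ℤ) else 1 := fun m =>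
    (Measurable.of_discrete (f := fun b : Bool => if b then (-1 : ℤ) else 1)).comp
      (measurable_pi_apply m)
  unfold pathEncode
  split_ifs
  · exact Finset.measurable_sum _ fun m _ => hstep m
  · exact (Finset.measurable_sum _ fun m _ => hstep m).neg

lemma measure_eq_zero_of_map_eq_of_preimage_ae_le {α : Type*} [MeasurableSpace α] {μ : Measure α}
    [IsFiniteMeasure μ] {f : α → α} (hf : AEMeasurable f μ) (hμ : μ.map f = μ) {A : ℤ → Set α}
    (hA : ∀ m, MeasurableSet (A m)) (hmono : Monotone A) (hpre : ∀ m, f ⁻¹' A m ≤ᵐ[μ] A (m - 1))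
    (hbot : μ (⋂ m, A m) = 0) (m : ℤ) : μ (A m) = 0 := by
  have hpred : ∀ m, μ (A (m - 1)) = μ (A m) := fun m =>
    le_antisymm (measure_mono (hmono (by omega))) <|
      calc μ (A m) = μ (f ⁻¹' A m) := by rw [← Measure.map_apply_of_aemeasurable hf (hA m), hμ]
        _ ≤ μ (A (m - 1)) := measure_mono_ae (hpre m)
  have hconst : ∀ n, μ (A n) = μ (A 0) := by
    intro n
    induction n using Int.induction_on with
    | zero => rfl
    | succ i ih => rw [← ih, ← hpred, add_sub_cancel_right]
    | pred i ih => rw [← ih, hpred]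
  have hlim := tendsto_measure_iInter_atBot (fun m => (hA m).nullMeasurableSet) hmono
    ⟨0, measure_ne_top μ _⟩
  rw [hbot, show ⇑μ ∘ A = fun _ => μ (A 0) from funext hconst, tendsto_const_nhds_iff] at hlim
  rw [hconst, hlim]

lemma ae_forall_not_isRecord_of_map_Tbbs_eq {μ : Measure (ℤ → Bool)} [IsProbabilityMeasure μ]
    (hcrit : ∀ᵐ η ∂μ, inScrit (pathEncode η)) (hT : μ.map Tbbs = μ) :
    ∀ᵐ η ∂μ, ∀ q, ¬ IsRecord (pathEncode η) q := by
  let A : ℤ → Set (ℤ → Bool) := fun m => {η | ∃ q ≤ m, IsRecord (pathEncode η) q}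
  have hA : ∀ m, MeasurableSet (A m) := fun m => by
    simp only [A, IsRecord, Set.ofPred_exists, Set.ofPred_and, Set.ofPred_forall]
    exact .iUnion fun q => (MeasurableSet.const _).inter <| .iInter fun r => .iInter fun _ =>
      measurableSet_lt (measurable_pathEncode_apply r) (measurable_pathEncode_apply q)
  have hmono : Monotone A := fun m m' hm _ ⟨q, hq, hrec⟩ => ⟨q, hq.trans hm, hrec⟩
  have hpre : ∀ m, Tbbs ⁻¹' A m ≤ᵐ[μ] A (m - 1) := fun m => by
    filter_upwards [hcrit] with η hη ⟨q, hq, hrec⟩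
    obtain ⟨lo, hi, h⟩ := exists_oscillatesAtBot_of_inScrit hη
    rw [pathEncode_Tbbs h.bddAbove_image_Iic] at hrec
    obtain ⟨p, hp, hrecp⟩ := h.exists_isRecord_of_isRecord_Tbb (abs_pathEncode_sub_pred η) hrec
    exact ⟨p, by omega, hrecp⟩
  have hbot : μ (⋂ m, A m) = 0 := measure_eq_zero_iff_ae_notMem.2 <| by
    filter_upwards [hcrit] with η hη hmem
    obtain ⟨lo, hi, h⟩ := exists_oscillatesAtBot_of_inScrit hη
    obtain ⟨m, hm⟩ := eventually_atBot.1 h.eventually_not_isRecord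
    obtain ⟨q, hq, hrec⟩ := Set.mem_iInter.1 hmem m
    exact hm q hq hrec
  have hAf : AEMeasurable Tbbs μ :=
    .of_map_ne_zero (by rw [hT]; exact IsProbabilityMeasure.ne_zero μ)
  rw [ae_all_iff]
  intro q
  filter_upwards [measure_eq_zero_iff_ae_notMem.1
    (measure_eq_zero_of_map_eq_of_preimage_ae_le hAf hT hA hmono hpre hbot q)] with η hη hrec
  exact hη ⟨q, le_rfl, hrec⟩

/-- If `μ` is a probability measure on `{0,1}^ℤ` supported on configurations
with path encoding in `𝒮_{critical}`, then `μ` is `T`-invariant iff it is invariant under the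
particle–hole involution `ι(η) n = 1 - η n`; and in that case a.e. `Tη = 1 - η`. -/
theorem stmt_14 (μ : Measure (ℤ → Bool)) [IsProbabilityMeasure μ]
    (hcrit : ∀ᵐ η ∂μ, inScrit (pathEncode η)) :
    (Measure.map Tbbs μ = μ ↔
      Measure.map (fun (η : ℤ → Bool) (n : ℤ) => !(η n)) μ = μ) ∧
    (Measure.map Tbbs μ = μ → ∀ᵐ η ∂μ, ∀ n : ℤ, Tbbs η n = !(η n)) := by
  have hflip : ∀ᵐ η ∂μ, (∀ q, ¬ IsRecord (pathEncode η) q) → Tbbs η = fun n => !η n := by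
    filter_upwards [hcrit] with η hη hnr
    obtain ⟨lo, hi, h⟩ := exists_oscillatesAtBot_of_inScrit hη
    exact Tbbs_eq_not_of_forall_not_isRecord h hnr
  have hT_ae : μ.map Tbbs = μ → Tbbs =ᵐ[μ] fun η n => !η n := fun hT => by
    filter_upwards [hflip, ae_forall_not_isRecord_of_map_Tbbs_eq hcrit hT] with η h hnr
    exact h hnr
  refine ⟨⟨fun hT => Measure.map_congr (hT_ae hT) ▸ hT, fun hι => ?_⟩,
    fun hT => (hT_ae hT).mono fun _ h => congrFun h⟩
  have hcrit' : ∀ᵐ η ∂μ, inScrit (pathEncode fun n => !η n) :=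
    ae_of_ae_map (p := fun η => inScrit (pathEncode η))
      (by fun_prop : Measurable fun (η : ℤ → Bool) (n : ℤ) => !η n).aemeasurable (by rwa [hι])
  have hι_ae : Tbbs =ᵐ[μ] fun η n => !η n := by
    filter_upwards [hflip, hcrit'] with η h hη
    obtain ⟨lo, hi, hneg⟩ := exists_oscillatesAtBot_of_inScrit hη
    rw [pathEncode_not] at hneg
    exact h (forall_not_isRecord_of_oscillatesAtBot_neg hneg)
  rw [Measure.map_congr hι_ae, hι]
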